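/- arXiv:2503.06904 — 2 statements merged into one kernel-verified Lean document; each statement's English description precedes it below -/
import Mathlib

section
/- There exists a constant C > 0 such that for every even integer n ≥ 4, |∑_{j=0}^{n/2−1} csc⁵((2j+1)π/n) − (93ζ(5)/(48π⁵))·n⁵| ≤ C·n³. -/
/-!
On `(0, π)`, `csc⁵ x = x⁻⁵ + (π - x)⁻⁵ + O(x⁻³ + (π - x)⁻³)`: near `0` this follows from
`x - x³/6 ≤ sin x ≤ x` together with Jordan's inequality `sin x ≥ 2x/π`, and the other endpoint
is its mirror image. The points `(2j+1)π/n`, `j < n/2`, are permuted by `x ↦ π - x`, so the sum is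
`2 (n/π)⁵ ∑_{j<n/2} (2j+1)⁻⁵` up to `O(n³ ∑ (2j+1)⁻³) = O(n³)`. Completing the odd sum to
`∑_{j≥0} (2j+1)⁻⁵ = (31/32) ζ(5)` costs a tail of size `O(n⁻²)`, i.e. again `O(n³)` after scaling.
-/

open Real Finset

lemma pow_sub_pow_le_mul_sub {α : Type*} [CommRing α] [LinearOrder α] [IsOrderedRing α]
    {a b : α} (hb : 0 ≤ b) (hba : b ≤ a) (q : ℕ) :
    a ^ q - b ^ q ≤ q * a ^ (q - 1) * (a - b) := by
  have h := abs_pow_sub_pow_le a b q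
  rw [abs_of_nonneg (sub_nonneg.2 (pow_le_pow_left₀ hb hba q)), abs_of_nonneg (sub_nonneg.2 hba),
    abs_of_nonneg hb, abs_of_nonneg (hb.trans hba), max_eq_left hba] at h
  linear_combination h

section OddPowerSums

variable {p : ℕ}

lemma summable_one_div_nat_add_one_pow (hp : 1 < p) :
    Summable fun k : ℕ => 1 / ((k : ℝ) + 1) ^ p := by
  simpa using (summable_nat_add_iff 1).2 (Real.summable_one_div_nat_pow.2 hp)

lemma summable_one_div_two_mul_add_one_pow (hp : 1 < p) :
    Summable fun j : ℕ => 1 / (2 * (j : ℝ) + 1) ^ p := by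
  simpa [Function.comp_def] using
    (summable_one_div_nat_add_one_pow hp).comp_injective (mul_right_injective₀ two_ne_zero)

lemma tsum_one_div_two_mul_add_one_pow (hp : 1 < p) :
    ∑' j : ℕ, 1 / (2 * (j : ℝ) + 1) ^ p = (1 - 1 / 2 ^ p) * ∑' k : ℕ, 1 / ((k : ℝ) + 1) ^ p := by
  set f : ℕ → ℝ := fun k => 1 / ((k : ℝ) + 1) ^ p with hf_def
  have hf : Summable f := summable_one_div_nat_add_one_pow hp
  have heven (j : ℕ) : f (2 * j) = 1 / (2 * (j : ℝ) + 1) ^ p := by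
    simp [hf_def]
  have hodd (k : ℕ) : f (2 * k + 1) = 1 / 2 ^ p * f k := by
    simp only [hf_def, one_div_mul_one_div, ← mul_pow]
    push_cast
    ring_nf
  have hsplit := tsum_even_add_odd (hf.comp_injective (mul_right_injective₀ two_ne_zero))
    (hf.comp_injective ((add_left_injective 1).comp (mul_right_injective₀ two_ne_zero)))
  simp only [heven, hodd, tsum_mul_left] at hsplit
  linear_combination hsplit

lemma tsum_sub_sum_one_div_two_mul_add_one_pow_le (hp : 1 < p) (m : ℕ) :
    ∑' j : ℕ, 1 / (2 * (j : ℝ) + 1) ^ (p + 2) - ∑ j ∈ range m, 1 / (2 * (j : ℝ) + 1) ^ (p + 2) ≤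
      (∑' j : ℕ, 1 / (2 * (j : ℝ) + 1) ^ p) / (2 * m + 1) ^ 2 := by
  rw [← (summable_one_div_two_mul_add_one_pow (by omega : 1 < p + 2)).sum_add_tsum_nat_add m,
    add_sub_cancel_left, ← tsum_div_const]
  refine Summable.tsum_le_tsum (fun i => ?_)
    ((summable_nat_add_iff m).2 (summable_one_div_two_mul_add_one_pow (by omega)))
    ((summable_one_div_two_mul_add_one_pow hp).div_const _)
  rw [div_div, pow_add]
  gcongr <;> linarith

lemma pow_mul_tsum_sub_sum_one_div_two_mul_add_one_pow_le (hp : 1 < p) (m : ℕ) :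
    (2 * m / π) ^ (p + 2) * (∑' j : ℕ, 1 / (2 * (j : ℝ) + 1) ^ (p + 2) -
        ∑ j ∈ range m, 1 / (2 * (j : ℝ) + 1) ^ (p + 2)) ≤
      (∑' j : ℕ, 1 / (2 * (j : ℝ) + 1) ^ p) * (2 * m) ^ p := by
  set K := ∑' j : ℕ, 1 / (2 * (j : ℝ) + 1) ^ p
  have hK : 0 ≤ K := tsum_nonneg fun j => by positivity
  have hpi : (2 * m / π) ^ (p + 2) ≤ (2 * m) ^ p * (2 * m + 1) ^ 2 := by
    calc (2 * m / π) ^ (p + 2) ≤ (2 * m) ^ (p + 2) := by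
          gcongr
          exact div_le_self (by positivity) (by linarith [pi_gt_three])
      _ ≤ (2 * m) ^ p * (2 * m + 1) ^ 2 := by
          rw [pow_add]
          gcongr
          linarith
  calc _ ≤ (2 * m / π) ^ (p + 2) * (K / (2 * m + 1) ^ 2) := by
        gcongr
        exact tsum_sub_sum_one_div_two_mul_add_one_pow_le hp m
    _ ≤ (2 * m) ^ p * (2 * m + 1) ^ 2 * (K / (2 * m + 1) ^ 2) := by
        gcongr
    _ = K * (2 * m) ^ p := by
        field_simp

end OddPowerSums

section CosecantPowers

variable {x : ℝ}

lemma one_div_sin_pow_sub_one_div_pow_le (hx : 0 < x) (hxπ : x ≤ π / 2) (p : ℕ) :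
    1 / sin x ^ (p + 2) - 1 / x ^ (p + 2) ≤ (p + 2) / 6 * (π / 2) ^ (p + 2) / x ^ p := by
  have hsin : 2 / π * x ≤ sin x := mul_le_sin hx.le hxπ
  have hsin₀ : 0 < sin x := lt_of_lt_of_le (by positivity) hsin
  have hcube : x - sin x ≤ x ^ 3 / 6 := by linarith [sin_ge_sub_cube hx.le]
  calc 1 / sin x ^ (p + 2) - 1 / x ^ (p + 2) = (sin x)⁻¹ ^ (p + 2) - x⁻¹ ^ (p + 2) := by
        simp only [one_div, inv_pow]
    _ ≤ (p + 2) * (sin x)⁻¹ ^ (p + 1) * ((sin x)⁻¹ - x⁻¹) := by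
        simpa using
          pow_sub_pow_le_mul_sub (inv_nonneg.2 hx.le) (inv_anti₀ hsin₀ (sin_le hx.le)) (p + 2)
    _ = (p + 2) * (x - sin x) / (sin x ^ (p + 2) * x) := by
        rw [inv_pow]
        field_simp
        ring
    _ ≤ (p + 2) * (x ^ 3 / 6) / ((2 / π * x) ^ (p + 2) * x) := by
        gcongr
    _ = (p + 2) / 6 * (π / 2) ^ (p + 2) / x ^ p := by
        rw [mul_pow, div_pow, div_pow]
        field_simp
        ring

lemma one_div_pow_le_one_div_sin_pow (hx : 0 < x) (hxπ : x < π) (q : ℕ) :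
    1 / x ^ q ≤ 1 / sin x ^ q :=
  have hsin₀ := sin_pos_of_pos_of_lt_pi hx hxπ
  one_div_le_one_div_of_le (pow_pos hsin₀ q) (pow_le_pow_left₀ hsin₀.le (sin_le hx.le) q)

lemma abs_one_div_sin_pow_sub_le (hx : 0 < x) (hxπ : x < π) (p : ℕ) :
    |1 / sin x ^ (p + 2) - (1 / x ^ (p + 2) + 1 / (π - x) ^ (p + 2))| ≤
      ((p + 2) / 6 * (π / 2) ^ (p + 2) + 1) * (1 / x ^ p + 1 / (π - x) ^ p) := by
  wlog hx₂ : x ≤ π / 2 generalizing x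
  · have h := this (x := π - x) (by linarith) (by linarith) (by linarith)
    rw [sin_pi_sub, sub_sub_cancel] at h
    rwa [add_comm (1 / x ^ (p + 2)), add_comm (1 / x ^ p)]
  have hy : 1 ≤ π - x := by linarith [pi_gt_three]
  set c : ℝ := (p + 2) / 6 * (π / 2) ^ (p + 2)
  have hc : 0 ≤ c := by positivity
  have hsin : 1 / sin x ^ (p + 2) - 1 / x ^ (p + 2) ≤ c * (1 / x ^ p) := by
    rw [mul_one_div]
    exact one_div_sin_pow_sub_one_div_pow_le hx hx₂ p
  have hsin₀ := sub_nonneg.2 (one_div_pow_le_one_div_sin_pow hx hxπ (p + 2))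
  have hrefl : 1 / (π - x) ^ (p + 2) ≤ 1 / (π - x) ^ p :=
    one_div_le_one_div_of_le (by positivity) (pow_le_pow_right₀ hy (by omega))
  have hx₀ : 0 ≤ 1 / x ^ p := by positivity
  have hy₀ : 0 ≤ 1 / (π - x) ^ (p + 2) := by positivity
  rw [abs_le]
  constructor <;> nlinarith [mul_nonneg hc hy₀, mul_nonneg hc (hy₀.trans hrefl)]

end CosecantPowers

section OddSamplePoints

variable {m : ℕ}

lemma odd_point_pos_of_lt {j : ℕ} (hj : j < m) : 0 < (2 * j + 1) * π / (2 * m) := by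
  have hm : (0 : ℝ) < m := by exact_mod_cast (by omega : 0 < m)
  positivity

lemma odd_point_lt_pi_of_lt {j : ℕ} (hj : j < m) : (2 * j + 1) * π / (2 * m) < π := by
  have hjm : (2 * j + 1 : ℝ) < 2 * m := by exact_mod_cast (by omega : 2 * j + 1 < 2 * m)
  rw [div_lt_iff₀ (by linarith)]
  nlinarith [pi_pos]

lemma sum_comp_pi_sub_odd_points (f : ℝ → ℝ) (m : ℕ) :
    ∑ j ∈ range m, f (π - (2 * j + 1) * π / (2 * m)) =
      ∑ j ∈ range m, f ((2 * j + 1) * π / (2 * m)) := by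
  rw [← sum_range_reflect]
  refine sum_congr rfl fun j hj => congrArg f ?_
  have hj := mem_range.1 hj
  have hm : (m : ℝ) ≠ 0 := by exact_mod_cast (by omega : m ≠ 0)
  rw [Nat.cast_sub (by omega), Nat.cast_sub (by omega)]
  field_simp
  push_cast
  ring

lemma sum_one_div_odd_point_pow (m q : ℕ) :
    ∑ j ∈ range m, 1 / ((2 * j + 1) * π / (2 * m)) ^ q =
      (2 * m / π) ^ q * ∑ j ∈ range m, 1 / (2 * (j : ℝ) + 1) ^ q := by
  rw [mul_sum]
  refine sum_congr rfl fun j hj => ?_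
  have hm : (m : ℝ) ≠ 0 := by exact_mod_cast (by have := mem_range.1 hj; omega : m ≠ 0)
  rw [← one_div_pow, one_div_div, ← one_div_pow, ← mul_pow]
  congr 1
  field_simp

lemma abs_sum_one_div_sin_odd_point_pow_sub_le {p : ℕ} (hp : 1 < p) (m : ℕ) :
    |∑ j ∈ range m, 1 / sin ((2 * j + 1) * π / (2 * m)) ^ (p + 2) -
        2 * ((2 * m / π) ^ (p + 2) * ∑ j ∈ range m, 1 / (2 * (j : ℝ) + 1) ^ (p + 2))| ≤
      2 * ((p + 2) / 6 * (π / 2) ^ (p + 2) + 1) * (∑' j : ℕ, 1 / (2 * (j : ℝ) + 1) ^ p) *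
        (2 * m) ^ p := by
  set c : ℝ := (p + 2) / 6 * (π / 2) ^ (p + 2) + 1
  have hc : 0 ≤ c := by positivity
  have hsym (q : ℕ) : ∑ j ∈ range m, (1 / ((2 * j + 1) * π / (2 * m)) ^ q +
      1 / (π - (2 * j + 1) * π / (2 * m)) ^ q) =
      2 * ((2 * m / π) ^ q * ∑ j ∈ range m, 1 / (2 * (j : ℝ) + 1) ^ q) := by
    rw [sum_add_distrib, sum_comp_pi_sub_odd_points (fun x => 1 / x ^ q), sum_one_div_odd_point_pow]
    ring
  have hhead : ∑ j ∈ range m, 1 / (2 * (j : ℝ) + 1) ^ p ≤ ∑' j : ℕ, 1 / (2 * (j : ℝ) + 1) ^ p :=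
    (summable_one_div_two_mul_add_one_pow hp).sum_le_tsum _ fun j _ => by positivity
  have hpi : (2 * m / π) ^ p ≤ (2 * m) ^ p := by
    gcongr
    exact div_le_self (by positivity) (by linarith [pi_gt_three])
  rw [← hsym, ← sum_sub_distrib]
  calc _ ≤ ∑ j ∈ range m, c * (1 / ((2 * j + 1) * π / (2 * m)) ^ p +
          1 / (π - (2 * j + 1) * π / (2 * m)) ^ p) := by
        refine (abs_sum_le_sum_abs _ _).trans (sum_le_sum fun j hj => ?_)
        have hj := mem_range.1 hj
        exact abs_one_div_sin_pow_sub_le (odd_point_pos_of_lt hj) (odd_point_lt_pi_of_lt hj) p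
    _ = 2 * c * ((2 * m / π) ^ p * ∑ j ∈ range m, 1 / (2 * (j : ℝ) + 1) ^ p) := by
        rw [← mul_sum, hsym]
        ring
    _ ≤ _ := by
        rw [mul_assoc _ (∑' j : ℕ, _), mul_comm (∑' j : ℕ, _)]
        gcongr

end OddSamplePoints

theorem csc_fifth_odd_sum_asymptotic :
    ∃ C : ℝ, 0 < C ∧ ∀ n : ℕ, Even n → 4 ≤ n →
      |(∑ j ∈ Finset.range (n / 2), (1 / Real.sin ((2 * j + 1) * π / n)) ^ 5) -
          (93 * (∑' k : ℕ, 1 / ((k : ℝ) + 1) ^ 5) / (48 * π ^ 5)) * n ^ 5| ≤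
        C * n ^ 3 := by
  set K := ∑' j : ℕ, 1 / (2 * (j : ℝ) + 1) ^ 3 with hK_def
  have hK : 0 < K := (summable_one_div_two_mul_add_one_pow (by norm_num)).tsum_pos
    (fun j => by positivity) 0 (by norm_num)
  refine ⟨2 * (5 / 6 * (π / 2) ^ 5 + 1) * K + 2 * K, by positivity, ?_⟩
  rintro n ⟨m, rfl⟩ -
  have hsin := abs_sum_one_div_sin_odd_point_pow_sub_le (p := 3) (by norm_num) m
  have htail := pow_mul_tsum_sub_sum_one_div_two_mul_add_one_pow_le (p := 3) (by norm_num) m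
  simp only [Nat.reduceAdd, Nat.cast_ofNat, ← hK_def] at hsin htail
  have hhead : 0 ≤ (2 * m / π) ^ 5 * (∑' j : ℕ, 1 / (2 * (j : ℝ) + 1) ^ 5 -
      ∑ j ∈ range m, 1 / (2 * (j : ℝ) + 1) ^ 5) :=
    mul_nonneg (by positivity) (sub_nonneg.2 ((summable_one_div_two_mul_add_one_pow
      (by norm_num)).sum_le_tsum _ fun j _ => by positivity))
  have hzeta : 93 * (∑' k : ℕ, 1 / ((k : ℝ) + 1) ^ 5) / (48 * π ^ 5) * (2 * m) ^ 5 =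
      2 * ((2 * m / π) ^ 5 * ∑' j : ℕ, 1 / (2 * (j : ℝ) + 1) ^ 5) := by
    rw [tsum_one_div_two_mul_add_one_pow (by norm_num)]
    field_simp
    ring
  rw [show (m + m) / 2 = m by omega, Nat.cast_add, ← two_mul, hzeta]
  simp only [one_div_pow]
  rw [abs_le] at hsin ⊢
  constructor <;> linarith [hsin.1, hsin.2]
end

section
/- For every even integer n ≥ 2 and every real φ with 0 < φ < 2π/n, the identity ∑_{j=0}^{n/2−1} csc(φ + 2jπ/n) = (n/π) ∫₀^∞ (tanh(nt/2)/sinh t)·cosh((nφ/π − 1)t) dt holds, where the integral on the right converges absolutely. -/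
/-!
With `n = 2N` and `c = nφ/π - 1`, the telescoping identity
`∑_{j<N} cosh((N - 1 - 2j - c)t) sinh t = cosh(ct) sinh(Nt)` splits the integrand into
`∑_{j<N} cosh(N(1 - 2θⱼ/π)t) / cosh(Nt)` with `θⱼ = φ + 2jπ/n ∈ (0, π)`. Each summand has
the classical integral `∫₀^∞ cosh(at)/cosh t dt = π / (2 cos(πa/2))` for `|a| < 1`, which the
substitution `x = (1 + e^{2t})⁻¹` reduces to the Beta integral
`B(p, 1 - p) = Γ(p)Γ(1 - p) = π / sin(πp)`.
-/

open MeasureTheory Real Set Finset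

lemma cpow_mul_one_sub_cpow_eq_ofReal {α β x : ℝ} (hx : x ∈ Set.Ioo 0 1) :
    (x : ℂ) ^ ((α : ℂ) - 1) * (1 - (x : ℂ)) ^ ((β : ℂ) - 1) =
      ((x ^ (α - 1) * (1 - x) ^ (β - 1) : ℝ) : ℂ) := by
  have hx1 : (0 : ℝ) ≤ 1 - x := by linarith [hx.2]
  push_cast [Complex.ofReal_cpow hx.1.le, Complex.ofReal_cpow hx1]
  ring_nf

lemma integrableOn_rpow_mul_one_sub_rpow {α β : ℝ} (hα : 0 < α) (hβ : 0 < β) :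
    IntegrableOn (fun x : ℝ => x ^ (α - 1) * (1 - x) ^ (β - 1)) (Ioo 0 1) := by
  have h := Complex.betaIntegral_convergent (u := α) (v := β) (by simpa) (by simpa)
  rw [intervalIntegrable_iff_integrableOn_Ioc_of_le zero_le_one] at h
  have h' := ((h.mono_set Ioo_subset_Ioc_self).congr_fun (fun x hx =>
    cpow_mul_one_sub_cpow_eq_ofReal (α := α) (β := β) hx) measurableSet_Ioo).re
  simpa [IntegrableOn] using h'

lemma integral_rpow_mul_one_sub_rpow {α β : ℝ} (hα : 0 < α) (hβ : 0 < β) :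
    ∫ x in Ioo (0 : ℝ) 1, x ^ (α - 1) * (1 - x) ^ (β - 1) =
      Gamma α * Gamma β / Gamma (α + β) := by
  have h := Complex.betaIntegral_eq_Gamma_mul_div α β (by simpa) (by simpa)
  rw [Complex.betaIntegral, intervalIntegral.integral_of_le zero_le_one,
    integral_Ioc_eq_integral_Ioo, setIntegral_congr_fun measurableSet_Ioo
      (fun x hx => cpow_mul_one_sub_cpow_eq_ofReal hx), integral_complex_ofReal,
    ← Complex.ofReal_add, Complex.Gamma_ofReal, Complex.Gamma_ofReal, Complex.Gamma_ofReal] at h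
  exact_mod_cast h

lemma integral_rpow_mul_one_sub_rpow_neg {p : ℝ} (hp0 : 0 < p) (hp1 : p < 1) :
    ∫ x in Ioo (0 : ℝ) 1, x ^ (p - 1) * (1 - x) ^ (-p) = π / sin (π * p) := by
  have h := integral_rpow_mul_one_sub_rpow hp0 (sub_pos.2 hp1)
  rwa [sub_sub_cancel_left, add_sub_cancel, Gamma_one, div_one, Gamma_mul_Gamma_one_sub] at h

lemma strictAnti_inv_one_add_exp_two_mul : StrictAnti fun t : ℝ => (1 + exp (2 * t))⁻¹ := by
  intro a b h
  dsimp only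
  gcongr

lemma image_inv_one_add_exp_two_mul :
    (fun t : ℝ => (1 + exp (2 * t))⁻¹) '' univ = Set.Ioo 0 1 := by
  ext x
  constructor
  · rintro ⟨t, -, rfl⟩
    exact ⟨by positivity, inv_lt_one_of_one_lt₀ (by linarith [exp_pos (2 * t)])⟩
  · rintro ⟨hx0, hx1⟩
    have hx : 0 < x⁻¹ - 1 := by linarith [(one_lt_inv₀ hx0).2 hx1]
    refine ⟨log (x⁻¹ - 1) / 2, mem_univ _, ?_⟩
    dsimp only
    rw [mul_div_cancel₀ (log _) two_ne_zero, exp_log hx, add_sub_cancel, inv_inv]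

lemma hasDerivAt_inv_one_add_exp_two_mul (t : ℝ) :
    HasDerivAt (fun t : ℝ => (1 + exp (2 * t))⁻¹)
      (-(exp (2 * t) * 2) / (1 + exp (2 * t)) ^ 2) t :=
  (((hasDerivAt_id t).const_mul 2).exp.const_add 1).inv (by positivity) |>.congr_deriv (by simp)

lemma abs_deriv_mul_rpow_inv_one_add_exp (p t : ℝ) :
    |-(exp (2 * t) * 2) / (1 + exp (2 * t)) ^ 2| *
        ((1 + exp (2 * t))⁻¹ ^ (p - 1) * (1 - (1 + exp (2 * t))⁻¹) ^ (-p)) =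
      exp ((1 - 2 * p) * t) / cosh t := by
  set L := 1 + exp (2 * t) with hL_def
  have hL : 0 < L := by positivity
  have hE : exp (2 * t) = exp t ^ 2 := by rw [← exp_nat_mul]; norm_num
  have h1 : L⁻¹ ^ (p - 1) = L ^ (1 - p) := by rw [inv_rpow hL.le, ← rpow_neg hL.le, neg_sub]
  have h2 : (1 - L⁻¹) ^ (-p) = exp (2 * t) ^ (-p) * L ^ p := by
    rw [show 1 - L⁻¹ = exp (2 * t) / L by field_simp; ring, div_rpow (by positivity) hL.le,
      rpow_neg hL.le, div_inv_eq_mul]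
  have h3 : L ^ (1 - p) * (exp (2 * t) ^ (-p) * L ^ p) = exp (2 * t) ^ (-p) * L := by
    rw [mul_left_comm, ← rpow_add hL, sub_add_cancel, rpow_one]
  have h4 : exp ((1 - 2 * p) * t) = exp t * exp (2 * t) ^ (-p) := by
    rw [← exp_mul, ← exp_add]; ring_nf
  rw [h1, h2, h3, h4, abs_div, abs_neg, abs_of_pos (by positivity), abs_of_pos (by positivity),
    cosh_eq, exp_neg, hL_def, hE]
  field_simp
  ring

lemma integrable_exp_mul_div_cosh {a : ℝ} (ha : |a| < 1) :
    Integrable fun t => exp (a * t) / cosh t := by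
  obtain ⟨ha1, ha2⟩ := abs_lt.1 ha
  have hg : IntegrableOn (fun x : ℝ => x ^ ((1 - a) / 2 - 1) * (1 - x) ^ (-((1 - a) / 2)))
      (Set.Ioo 0 1) := by
    simpa using integrableOn_rpow_mul_one_sub_rpow (α := (1 - a) / 2) (β := 1 - (1 - a) / 2)
      (by linarith) (by linarith)
  rw [← image_inv_one_add_exp_two_mul, integrableOn_image_iff_integrableOn_abs_deriv_smul
    MeasurableSet.univ (fun t _ => (hasDerivAt_inv_one_add_exp_two_mul t).hasDerivWithinAt)
    strictAnti_inv_one_add_exp_two_mul.injective.injOn] at hg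
  simpa [abs_deriv_mul_rpow_inv_one_add_exp, show 1 - 2 * ((1 - a) / 2) = a by ring] using hg

lemma integral_exp_mul_div_cosh {a : ℝ} (ha : |a| < 1) :
    ∫ t, exp (a * t) / cosh t = π / cos (π * a / 2) := by
  obtain ⟨ha1, ha2⟩ := abs_lt.1 ha
  have h := integral_rpow_mul_one_sub_rpow_neg (p := (1 - a) / 2) (by linarith) (by linarith)
  rw [← image_inv_one_add_exp_two_mul, integral_image_eq_integral_abs_deriv_smul
    MeasurableSet.univ (fun t _ => (hasDerivAt_inv_one_add_exp_two_mul t).hasDerivWithinAt)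
    strictAnti_inv_one_add_exp_two_mul.injective.injOn] at h
  simp only [smul_eq_mul, abs_deriv_mul_rpow_inv_one_add_exp, setIntegral_univ,
    show 1 - 2 * ((1 - a) / 2) = a by ring] at h
  rwa [show π * ((1 - a) / 2) = π / 2 - π * a / 2 by ring, sin_pi_div_two_sub] at h

lemma cosh_mul_div_cosh_eq (a t : ℝ) :
    cosh (a * t) / cosh t = (exp (a * t) / cosh t + exp (-a * t) / cosh t) / 2 := by
  rw [cosh_eq, neg_mul]
  ring

lemma integrable_cosh_mul_div_cosh {a : ℝ} (ha : |a| < 1) :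
    Integrable fun t => cosh (a * t) / cosh t := by
  simp_rw [cosh_mul_div_cosh_eq]
  exact ((integrable_exp_mul_div_cosh ha).add
    (integrable_exp_mul_div_cosh (by rwa [abs_neg]))).div_const 2

lemma integral_cosh_mul_div_cosh {a : ℝ} (ha : |a| < 1) :
    ∫ t, cosh (a * t) / cosh t = π / cos (π * a / 2) := by
  simp_rw [cosh_mul_div_cosh_eq]
  rw [integral_div, integral_add (integrable_exp_mul_div_cosh ha)
    (integrable_exp_mul_div_cosh (by rwa [abs_neg])), integral_exp_mul_div_cosh ha,
    integral_exp_mul_div_cosh (by rwa [abs_neg]), mul_neg, neg_div, cos_neg]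
  ring

lemma cosh_mul_abs (a t : ℝ) : cosh (a * |t|) = cosh (a * t) := by
  rcases abs_choice t with h | h <;> simp [h]

lemma integral_Ioi_cosh_mul_div_cosh {a : ℝ} (ha : |a| < 1) :
    ∫ t in Ioi 0, cosh (a * t) / cosh t = π / (2 * cos (π * a / 2)) := by
  have h := integral_comp_abs (f := fun t => cosh (a * t) / cosh t)
  simp only [cosh_mul_abs, cosh_abs, integral_cosh_mul_div_cosh ha] at h
  rw [div_mul_eq_div_div_swap, h]
  ring

lemma abs_one_sub_two_mul_div_pi_lt_one {θ : ℝ} (hθ : θ ∈ Set.Ioo 0 π) :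
    |1 - 2 * θ / π| < 1 := by
  have h0 : 0 < 2 * θ / π := div_pos (by linarith [hθ.1]) pi_pos
  have h2 : 2 * θ / π < 2 := by rw [div_lt_iff₀ pi_pos]; linarith [hθ.2]
  rw [abs_lt]
  constructor <;> linarith

lemma cosh_mul_mul_div_cosh_mul (k a : ℝ) :
    (fun t => cosh (k * a * t) / cosh (k * t)) = fun t => cosh (a * (k * t)) / cosh (k * t) := by
  simp_rw [mul_left_comm a, mul_assoc]

lemma integrableOn_Ioi_cosh_div_cosh_of_mem_Ioo {k θ : ℝ} (hk : 0 < k)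
    (hθ : θ ∈ Set.Ioo 0 π) :
    IntegrableOn (fun t => cosh (k * (1 - 2 * θ / π) * t) / cosh (k * t)) (Ioi 0) := by
  rw [cosh_mul_mul_div_cosh_mul, integrableOn_Ioi_comp_mul_left_iff
    (fun t => cosh ((1 - 2 * θ / π) * t) / cosh t) 0 hk]
  exact (integrable_cosh_mul_div_cosh (abs_one_sub_two_mul_div_pi_lt_one hθ)).integrableOn

lemma integral_Ioi_cosh_div_cosh_of_mem_Ioo {k θ : ℝ} (hk : 0 < k)
    (hθ : θ ∈ Set.Ioo 0 π) :
    ∫ t in Ioi 0, cosh (k * (1 - 2 * θ / π) * t) / cosh (k * t) = π / (2 * k * sin θ) := by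
  rw [cosh_mul_mul_div_cosh_mul, integral_comp_mul_left_Ioi
    (fun t => cosh ((1 - 2 * θ / π) * t) / cosh t) 0 hk, mul_zero,
    integral_Ioi_cosh_mul_div_cosh (abs_one_sub_two_mul_div_pi_lt_one hθ),
    show π * (1 - 2 * θ / π) / 2 = π / 2 - θ by field_simp, cos_pi_div_two_sub,
    smul_eq_mul]
  field_simp

lemma sum_range_cosh_add_mul_sinh (N : ℕ) (x u : ℝ) :
    ∑ j ∈ range N, cosh (x + (N - 1 - 2 * j) * u) * sinh u = cosh x * sinh (N * u) := by
  have htel : ∀ j : ℕ, cosh (x + (N - 1 - 2 * j) * u) * sinh u =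
      sinh (x + (N - 2 * j) * u) / 2 - sinh (x + (N - 2 * (j + 1 : ℕ)) * u) / 2 := by
    intro j
    push_cast
    rw [show x + (N - 2 * j) * u = x + (N - 1 - 2 * j) * u + u by ring,
      show x + (N - 2 * (j + 1)) * u = x + (N - 1 - 2 * j) * u - u by ring, sinh_add, sinh_sub]
    ring
  rw [sum_congr rfl fun j _ => htel j,
    sum_range_sub' (fun j : ℕ => sinh (x + (N - 2 * j) * u) / 2),
    show x + (N - 2 * (0 : ℕ)) * u = x + N * u by push_cast; ring,
    show x + (N - 2 * N) * u = x - N * u by ring, sinh_add, sinh_sub]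
  ring

lemma tanh_div_sinh_mul_cosh_eq_sum (N : ℕ) (c : ℝ) {u : ℝ} (hu : sinh u ≠ 0) :
    tanh (N * u) / sinh u * cosh (c * u) =
      ∑ j ∈ range N, cosh ((N - 1 - 2 * j - c) * u) / cosh (N * u) := by
  have hsum : ∑ j ∈ range N, cosh ((N - 1 - 2 * j - c) * u) =
      cosh (c * u) * sinh (N * u) / sinh u := by
    rw [eq_div_iff hu, sum_mul, ← cosh_neg, ← sum_range_cosh_add_mul_sinh N (-(c * u)) u]
    congr! 3 with j
    ring
  rw [← sum_div, hsum, tanh_eq_sinh_div_cosh]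
  field_simp

lemma add_two_mul_mul_pi_div_mem_Ioo {N j : ℕ} (hj : j < N) {φ : ℝ} (hφ0 : 0 < φ)
    (hφ1 : φ < 2 * π / (2 * N)) : φ + 2 * j * π / (2 * N) ∈ Set.Ioo 0 π := by
  have hj' : (j : ℝ) + 1 ≤ N := by exact_mod_cast hj
  have hN : (0 : ℝ) < 2 * N := by linarith [(j.cast_nonneg : (0 : ℝ) ≤ j)]
  rw [lt_div_iff₀ hN] at hφ1
  rw [← mul_div_cancel_right₀ φ hN.ne', ← add_div]
  refine ⟨by positivity, (div_lt_iff₀ hN).2 ?_⟩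
  nlinarith [pi_pos]

theorem csc_sum_integral_representation_general (n : ℕ) (hn : Even n)
    (φ : ℝ) (hφ0 : 0 < φ) (hφ1 : φ < 2 * π / n) :
    IntegrableOn
      (fun t : ℝ => Real.tanh (n * t / 2) / Real.sinh t *
        Real.cosh ((n * φ / π - 1) * t)) (Ioi 0) ∧
    (∑ j ∈ Finset.range (n / 2), 1 / Real.sin (φ + 2 * j * π / n)) =
      (n / π) * ∫ t in Ioi (0 : ℝ),
        Real.tanh (n * t / 2) / Real.sinh t * Real.cosh ((n * φ / π - 1) * t) := by
  obtain ⟨N, rfl⟩ := hn.two_dvd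
  rw [show 2 * N / 2 = N by omega]
  push_cast at hφ1 ⊢
  set θ : ℕ → ℝ := fun j => φ + 2 * j * π / (2 * N)
  have hN : ∀ j ∈ range N, (0 : ℝ) < N := fun j hj => by
    exact_mod_cast (Nat.zero_le j).trans_lt (mem_range.1 hj)
  have hθ : ∀ j ∈ range N, θ j ∈ Set.Ioo 0 π := fun j hj =>
    add_two_mul_mul_pi_div_mem_Ioo (mem_range.1 hj) hφ0 hφ1
  have hpoint : EqOn (fun t => tanh (2 * N * t / 2) / sinh t * cosh ((2 * N * φ / π - 1) * t))
      (fun t => ∑ j ∈ range N, cosh (N * (1 - 2 * θ j / π) * t) / cosh (N * t)) (Ioi 0) := by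
    intro t ht
    dsimp only
    rw [show 2 * N * t / 2 = N * t by ring,
      tanh_div_sinh_mul_cosh_eq_sum N _ (sinh_pos_iff.2 ht).ne']
    refine sum_congr rfl fun j hj => ?_
    have := (hN j hj).ne'
    simp only [θ]
    field_simp
    ring_nf
  have hint : ∀ j ∈ range N, IntegrableOn
      (fun t => cosh (N * (1 - 2 * θ j / π) * t) / cosh (N * t)) (Ioi 0) := fun j hj =>
    integrableOn_Ioi_cosh_div_cosh_of_mem_Ioo (hN j hj) (hθ j hj)
  refine ⟨IntegrableOn.congr_fun (integrable_finsetSum _ hint) hpoint.symm measurableSet_Ioi,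
    ?_⟩
  rw [setIntegral_congr_fun measurableSet_Ioi hpoint, integral_finsetSum _ hint, mul_sum]
  refine sum_congr rfl fun j hj => ?_
  have := (sin_pos_of_pos_of_lt_pi (hθ j hj).1 (hθ j hj).2).ne'
  have := (hN j hj).ne'
  rw [integral_Ioi_cosh_div_cosh_of_mem_Ioo (hN j hj) (hθ j hj)]
  change 1 / sin (θ j) = _
  field_simp

theorem csc_sum_integral_representation (n : ℕ) (hn : Even n) (hn2 : 2 ≤ n)
    (φ : ℝ) (hφ0 : 0 < φ) (hφ1 : φ < 2 * π / n) :
    IntegrableOn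
      (fun t : ℝ => Real.tanh (n * t / 2) / Real.sinh t *
        Real.cosh ((n * φ / π - 1) * t)) (Ioi 0) ∧
    (∑ j ∈ Finset.range (n / 2), 1 / Real.sin (φ + 2 * j * π / n)) =
      (n / π) * ∫ t in Ioi (0 : ℝ),
        Real.tanh (n * t / 2) / Real.sinh t * Real.cosh ((n * φ / π - 1) * t) :=
  csc_sum_integral_representation_general n hn φ hφ0 hφ1
end
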